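/- arXiv:1509.03985 — 2 statements merged into one kernel-verified Lean document; each statement's English description precedes it below -/
import Mathlib

section
/- Proposition 1 (persistent feasibility of the AMoD system): If x = (d, p, u) is a feasible state, c are arrivals, and (v, w) is a control feasible at (x, c), then the successor state x⁺ = (d⁺, p⁺, u⁺) is feasible; that is: d⁺(i,j) ≥ 0 and d⁺(i,i) = 0 for all i, j ∈ N; p⁺(k,i,T) ∈ {0,1} for all k, i, T with Σ_{i,T} p⁺(k,i,T) ≤ 1 for every k ∈ V; and u⁺(k,i) ∈ {0,1} for all k, i with Σ_i u⁺(k,i) + Σ_{i,T} p⁺(k,i,T) = 1 for every k ∈ V. -/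
/-! ## AMoD model (Zhang, Rossi, Pavone) -/

/-- A state of the AMoD system: waiting customers `d`, travel indicators `p`,
waiting-vehicle indicators `u`. -/
structure AMoDState (N V : Type) where
  d : N → N → ℤ
  p : V → N → ℕ → ℤ
  u : V → N → ℤ

/-- A control of the AMoD system: customer-carrying trips `v`, rebalancing trips `w`. -/
structure AMoDControl (N V : Type) where
  v : V → N → N → ℤ
  w : V → N → N → ℤ

variable {N V : Type} [Fintype N] [DecidableEq N] [Fintype V]

/-- `Tmax i = (max_{j ≠ i} t j i) - 1`. -/
def Tmax (t : N → N → ℕ) (i : N) : ℕ :=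
  ((Finset.univ : Finset N).erase i).sup (fun j => t j i) - 1

/-- `tmax = max_{i ≠ j} t i j`. -/
def tmax (t : N → N → ℕ) : ℕ :=
  ((Finset.univ : Finset N).offDiag).sup (fun p => t p.1 p.2)

/-- `Σ_{i ∈ N} Σ_{T = 0}^{Tmax i} p k i T`. -/
def pSum (t : N → N → ℕ) (x : AMoDState N V) (k : V) : ℤ :=
  ∑ i : N, ∑ T ∈ Finset.range (Tmax t i + 1), x.p k i T

/-- Validity of a state: `d` nonnegative and zero on the diagonal,
`p` and `u` binary (and `p` vanishing out of range). -/
structure IsState (t : N → N → ℕ) (x : AMoDState N V) : Prop where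
  d_nonneg : ∀ i j, 0 ≤ x.d i j
  d_diag : ∀ i, x.d i i = 0
  p_bin : ∀ k i T, T ≤ Tmax t i → x.p k i T = 0 ∨ x.p k i T = 1
  p_oob : ∀ k i T, Tmax t i < T → x.p k i T = 0
  u_bin : ∀ k i, x.u k i = 0 ∨ x.u k i = 1

/-- Feasibility of a state: validity, constraint (P), and constraint (UP). -/
structure FeasState (t : N → N → ℕ) (x : AMoDState N V) : Prop where
  isState : IsState t x
  constrP : ∀ k, pSum t x k ≤ 1
  constrUP : ∀ k, (∑ i : N, x.u k i) + pSum t x k = 1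

/-- Validity of a control: binary values, zero diagonal. -/
structure IsControl (uc : AMoDControl N V) : Prop where
  v_bin : ∀ k i j, uc.v k i j = 0 ∨ uc.v k i j = 1
  w_bin : ∀ k i j, uc.w k i j = 0 ∨ uc.w k i j = 1
  v_diag : ∀ k i, uc.v k i i = 0
  w_diag : ∀ k i, uc.w k i i = 0

/-- Arrivals: nonnegative integers, zero on the diagonal. -/
def IsArrivals (c : N → N → ℤ) : Prop :=
  (∀ i j, 0 ≤ c i j) ∧ (∀ i, c i i = 0)

/-- Feasibility of a control at `(x, c)`: validity together with
constraints (A) and (B). -/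
structure FeasControl (t : N → N → ℕ) (x : AMoDState N V) (c : N → N → ℤ)
    (uc : AMoDControl N V) : Prop where
  isControl : IsControl uc
  constrA : ∀ k i, (∑ j : N, (uc.v k i j + uc.w k i j)) ≤ x.u k i + x.p k i 0
  constrB : ∀ i j, (∑ k : V, uc.v k i j) ≤ x.d i j + c i j

/-- The successor state `x⁺` of `x` under control `(v, w)` with arrivals `c`. -/
def succState (t : N → N → ℕ) (x : AMoDState N V) (c : N → N → ℤ)
    (uc : AMoDControl N V) : AMoDState N V where
  d := fun i j => x.d i j + c i j - ∑ k : V, uc.v k i j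
  p := fun k i T =>
    if T < Tmax t i then
      x.p k i (T + 1) +
        ∑ j ∈ Finset.univ.filter (fun j => t j i = T + 1), (uc.v k j i + uc.w k j i)
    else if T = Tmax t i then
      ∑ j ∈ Finset.univ.filter (fun j => t j i = Tmax t i + 1), (uc.v k j i + uc.w k j i)
    else 0
  u := fun k i => x.u k i + x.p k i 0 - ∑ j : N, (uc.v k i j + uc.w k i j)

/-- A feasible trajectory of the undisturbed system (`c ≡ 0`) from `x` over `n` steps. -/
def FeasTraj (t : N → N → ℕ) (x : AMoDState N V) (n : ℕ)
    (xs : ℕ → AMoDState N V) (cs : ℕ → AMoDControl N V) : Prop :=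
  xs 0 = x ∧ ∀ τ < n, FeasControl t (xs τ) (fun _ _ => 0) (cs τ) ∧
    xs (τ + 1) = succState t (xs τ) (fun _ _ => 0) (cs τ)

/-- The primary cost: total number of waiting customers. -/
def Jx (x : AMoDState N V) : ℤ := ∑ i : N, ∑ j : N, x.d i j

/-- The secondary cost: total rebalancing travel time. -/
def Ju (t : N → N → ℕ) (uc : AMoDControl N V) : ℤ :=
  ∑ k : V, ∑ i : N, ∑ j : N, (t i j : ℤ) * uc.w k i j

/-- The MPC cost of a plan over the horizon `thor`. -/
def planCost (t : N → N → ℕ) (ρ1 : ℝ) (thor : ℕ)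
    (xs : ℕ → AMoDState N V) (cs : ℕ → AMoDControl N V) : ℝ :=
  ∑ τ ∈ Finset.range thor, ((Jx (xs (τ + 1)) : ℝ) + ρ1 * (Ju t (cs τ) : ℝ))

/-- An MPC-optimal plan at a feasible state `x`. -/
def MPCOptimal (t : N → N → ℕ) (ρ1 : ℝ) (thor : ℕ) (x : AMoDState N V)
    (xs : ℕ → AMoDState N V) (cs : ℕ → AMoDControl N V) : Prop :=
  FeasTraj t x thor xs cs ∧
    ∀ ys ds, FeasTraj t x thor ys ds →
      planCost t ρ1 thor xs cs ≤ planCost t ρ1 thor ys ds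

/-- An (infinite) MPC trajectory of the undisturbed system: a feasible trajectory in
which every applied control is the first control of some MPC-optimal plan. -/
def MPCTraj (t : N → N → ℕ) (ρ1 : ℝ) (thor : ℕ)
    (xs : ℕ → AMoDState N V) (cs : ℕ → AMoDControl N V) : Prop :=
  (∀ τ, FeasControl t (xs τ) (fun _ _ => 0) (cs τ) ∧
      xs (τ + 1) = succState t (xs τ) (fun _ _ => 0) (cs τ)) ∧
  (∀ τ, ∃ ys ds, MPCOptimal t ρ1 thor (xs τ) ys ds ∧ ds 0 = cs τ)


section Aux

variable {N V : Type} [Fintype N] [DecidableEq N] [Fintype V]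

/-- For `j ≠ i`, the travel time `t j i` satisfies `1 ≤ t j i ≤ Tmax t i + 1`. -/
lemma t_le_Tmax (t : N → N → ℕ) (ht : ∀ i j : N, i ≠ j → 1 ≤ t i j)
    {i j : N} (hij : j ≠ i) : 1 ≤ t j i ∧ t j i ≤ Tmax t i + 1 := by
  have h1 : 1 ≤ t j i := ht j i hij
  have hmem : j ∈ (Finset.univ : Finset N).erase i := by simp [hij]
  have hle : t j i ≤ ((Finset.univ : Finset N).erase i).sup (fun j => t j i) :=
    Finset.le_sup (f := fun j => t j i) hmem
  unfold Tmax
  omega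

end Aux

/-- **Proposition 1 (persistent feasibility).** If `x` is a feasible state, `c` are
arrivals, and `(v, w)` is a control feasible at `(x, c)`, then the successor state
`x⁺` is feasible. -/
theorem persistent_feasibility {N V : Type} [Fintype N] [DecidableEq N] [Fintype V]
    (t : N → N → ℕ) (hcard : 2 ≤ Fintype.card N) (ht : ∀ i j : N, i ≠ j → 1 ≤ t i j)
    (x : AMoDState N V) (hx : FeasState t x)
    (c : N → N → ℤ) (hc : IsArrivals c)
    (uc : AMoDControl N V) (huc : FeasControl t x c uc) :
    FeasState t (succState t x c uc) := by
  obtain ⟨hS, hP, hUP⟩ := hx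
  obtain ⟨hC, hA, hB⟩ := huc
  have hfnn : ∀ k i j, (0:ℤ) ≤ uc.v k i j + uc.w k i j := by
    intro k i j
    rcases hC.v_bin k i j with h | h <;> rcases hC.w_bin k i j with h' | h' <;> omega
  have hfdiag : ∀ k i, uc.v k i i + uc.w k i i = 0 := by
    intro k i; rw [hC.v_diag, hC.w_diag]; ring
  have hpnn : ∀ k i T, (0:ℤ) ≤ x.p k i T := by
    intro k i T
    rcases le_or_gt T (Tmax t i) with h | h
    · rcases hS.p_bin k i T h with h' | h' <;> omega
    · rw [hS.p_oob k i T h]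
  have hunn : ∀ k i, (0:ℤ) ≤ x.u k i := by
    intro k i; rcases hS.u_bin k i with h | h <;> omega
  -- nonnegativity of the filter sums
  have hfsum_nn : ∀ k i (s : Finset N), (0:ℤ) ≤ ∑ j ∈ s, (uc.v k j i + uc.w k j i) :=
    fun k i s => Finset.sum_nonneg (fun j _ => hfnn k j i)
  -- p⁺ is nonnegative
  have hp'nn : ∀ k i T, (0:ℤ) ≤ (succState t x c uc).p k i T := by
    intro k i T
    simp only [succState]
    split_ifs with h1 h2
    · exact add_nonneg (hpnn k i (T+1)) (hfsum_nn k i _)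
    · exact hfsum_nn k i _
    · exact le_refl 0
  -- u⁺ is nonnegative
  have hu'nn : ∀ k i, (0:ℤ) ≤ (succState t x c uc).u k i := by
    intro k i
    have := hA k i
    simp only [succState]
    linarith
  -- the inner-sum of pSum is nonneg, and p k i 0 ≤ pSum
  have hinner_nn : ∀ k i, (0:ℤ) ≤ ∑ T ∈ Finset.range (Tmax t i + 1), x.p k i T :=
    fun k i => Finset.sum_nonneg (fun T _ => hpnn k i T)
  have hp0_le : ∀ k i, x.p k i 0 ≤ pSum t x k := by
    intro k i
    have h1 : x.p k i 0 ≤ ∑ T ∈ Finset.range (Tmax t i + 1), x.p k i T :=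
      Finset.single_le_sum (f := fun T => x.p k i T) (fun T _ => hpnn k i T)
        (Finset.mem_range.mpr (Nat.succ_pos _))
    have h2 : (∑ T ∈ Finset.range (Tmax t i + 1), x.p k i T) ≤ pSum t x k :=
      Finset.single_le_sum (f := fun i => ∑ T ∈ Finset.range (Tmax t i + 1), x.p k i T)
        (fun i _ => hinner_nn k i) (Finset.mem_univ i)
    linarith
  have hu_le : ∀ k i, x.u k i ≤ ∑ i : N, x.u k i :=
    fun k i => Finset.single_le_sum (f := fun i => x.u k i)
      (fun i _ => hunn k i) (Finset.mem_univ i)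
  have hup_le1 : ∀ k i, x.u k i + x.p k i 0 ≤ 1 := by
    intro k i
    have := hUP k
    have := hp0_le k i
    have := hu_le k i
    have : (0:ℤ) ≤ pSum t x k := Finset.sum_nonneg (fun i _ => hinner_nn k i)
    have : (0:ℤ) ≤ ∑ i : N, x.u k i := Finset.sum_nonneg (fun i _ => hunn k i)
    linarith [hUP k, hp0_le k i, hu_le k i]
  -- the filter-sum collapse
  have hfilter : ∀ k i, ∑ T ∈ Finset.range (Tmax t i + 1),
      ∑ j ∈ Finset.univ.filter (fun j => t j i = T + 1), (uc.v k j i + uc.w k j i)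
      = ∑ j : N, (uc.v k j i + uc.w k j i) := by
    intro k i
    simp only [Finset.sum_filter]
    rw [Finset.sum_comm]
    refine Finset.sum_congr rfl (fun j _ => ?_)
    by_cases hji : j = i
    · subst hji
      rw [hfdiag k j]
      simp
    · obtain ⟨h1, h2⟩ := t_le_Tmax t ht hji
      rw [Finset.sum_eq_single_of_mem (t j i - 1)
        (Finset.mem_range.mpr (by omega))]
      · rw [if_pos (by omega)]
      · intro b _ hb
        rw [if_neg (by omega)]
  -- the key pSum identity
  have hkey : ∀ k, pSum t (succState t x c uc) k
      = pSum t x k - (∑ i : N, x.p k i 0)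
        + ∑ i : N, ∑ j : N, (uc.v k j i + uc.w k j i) := by
    intro k
    unfold pSum
    have hterm : ∀ i : N, ∑ T ∈ Finset.range (Tmax t i + 1), (succState t x c uc).p k i T
        = ((∑ T ∈ Finset.range (Tmax t i + 1), x.p k i T) - x.p k i 0)
          + ∑ j : N, (uc.v k j i + uc.w k j i) := by
      intro i
      have hsplit : ∀ T ∈ Finset.range (Tmax t i + 1), (succState t x c uc).p k i T
          = (if T < Tmax t i then x.p k i (T + 1) else 0)
            + ∑ j ∈ Finset.univ.filter (fun j => t j i = T + 1),
                (uc.v k j i + uc.w k j i) := by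
        intro T hT
        rw [Finset.mem_range] at hT
        simp only [succState]
        split_ifs with h1 h2
        · rfl
        · rw [h2, zero_add]
        · omega
      rw [Finset.sum_congr rfl hsplit, Finset.sum_add_distrib, hfilter k i]
      congr 1
      have h1 : ∑ T ∈ Finset.range (Tmax t i + 1),
          (if T < Tmax t i then x.p k i (T + 1) else 0)
          = ∑ T ∈ Finset.range (Tmax t i), x.p k i (T + 1) := by
        rw [Finset.sum_range_succ, if_neg (lt_irrefl _), add_zero]
        exact Finset.sum_congr rfl (fun T hT =>
          if_pos (Finset.mem_range.mp hT))
      rw [h1]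
      have h2 := Finset.sum_range_succ' (fun T => x.p k i T) (Tmax t i)
      omega
    rw [Finset.sum_congr rfl (fun i _ => hterm i), Finset.sum_add_distrib,
      Finset.sum_sub_distrib]
  -- sum of u⁺
  have husum : ∀ k, ∑ i : N, (succState t x c uc).u k i
      = (∑ i : N, x.u k i) + (∑ i : N, x.p k i 0)
        - ∑ i : N, ∑ j : N, (uc.v k i j + uc.w k i j) := by
    intro k
    simp only [succState]
    rw [Finset.sum_sub_distrib, Finset.sum_add_distrib]
  -- constraint (UP) for the successor
  have hUP' : ∀ k, (∑ i : N, (succState t x c uc).u k i)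
      + pSum t (succState t x c uc) k = 1 := by
    intro k
    rw [husum k, hkey k, Finset.sum_comm (f := fun i j => uc.v k i j + uc.w k i j)]
    have := hUP k
    linarith
  -- constraint (P) for the successor
  have hP' : ∀ k, pSum t (succState t x c uc) k ≤ 1 := by
    intro k
    have h := hUP' k
    have : (0:ℤ) ≤ ∑ i : N, (succState t x c uc).u k i :=
      Finset.sum_nonneg (fun i _ => hu'nn k i)
    linarith
  -- each p⁺ term is ≤ pSum⁺
  have hp'le : ∀ k i T, T ≤ Tmax t i → (succState t x c uc).p k i T ≤ 1 := by
    intro k i T hT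
    have hinn : (succState t x c uc).p k i T
        ≤ ∑ T ∈ Finset.range (Tmax t i + 1), (succState t x c uc).p k i T :=
      Finset.single_le_sum (f := fun T => (succState t x c uc).p k i T)
        (fun T _ => hp'nn k i T) (Finset.mem_range.mpr (by omega))
    have hout : (∑ T ∈ Finset.range (Tmax t i + 1), (succState t x c uc).p k i T)
        ≤ pSum t (succState t x c uc) k :=
      Finset.single_le_sum
        (f := fun i => ∑ T ∈ Finset.range (Tmax t i + 1), (succState t x c uc).p k i T)
        (fun i _ => Finset.sum_nonneg (fun T _ => hp'nn k i T)) (Finset.mem_univ i)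
    have := hP' k
    linarith
  refine ⟨⟨?_, ?_, ?_, ?_, ?_⟩, hP', hUP'⟩
  · intro i j
    simp only [succState]
    have := hB i j
    linarith
  · intro i
    simp only [succState]
    have : ∑ k : V, uc.v k i i = 0 :=
      Finset.sum_eq_zero (fun k _ => hC.v_diag k i)
    rw [hS.d_diag i, hc.2 i, this]
    ring
  · intro k i T hT
    have h0 := hp'nn k i T
    have h1 := hp'le k i T hT
    omega
  · intro k i T hT
    simp only [succState]
    rw [if_neg (by omega), if_neg (by omega)]
  · intro k i
    have h0 := hu'nn k i
    have h1 : (succState t x c uc).u k i ≤ 1 := by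
      simp only [succState]
      have := hup_le1 k i
      have := hfsum_nn k i Finset.univ
      have hs : (0:ℤ) ≤ ∑ j : N, (uc.v k i j + uc.w k i j) :=
        Finset.sum_nonneg (fun j _ => hfnn k i j)
      linarith
    omega
end

section
/- Theorem 1 (asymptotic stability of MPC without charging constraints, the AMoD Regulation Problem): Suppose V is nonempty and t_hor ≥ 2·tmax. There exists ρ̄ > 0 (depending only on N, V, t, and t_hor) such that for every weight 0 ≤ ρ₁ < ρ̄ and every MPC trajectory of the undisturbed system starting from any feasible state, there exists a time T with d(i,j)(τ) = 0 for all i, j ∈ N and all τ ≥ T; equivalently J_x(x(τ)) → 0 as τ → ∞, i.e., the model predictive controller drives the number of waiting customers to zero. -/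
variable {N V : Type} [Fintype N] [DecidableEq N] [Fintype V]

/-!
The backlog `Jx` never increases along the closed loop, so it is eventually constant, equal to
some `D`. Suppose `D > 0`. Some vehicle can reach and serve a waiting customer within
`2 tmax ≤ thor` steps at rebalancing cost at most `tmax`, so the optimal MPC cost satisfies
`V(x) ≤ thor * D - 1 + ρ₁ * tmax < thor * D` once `ρ₁ < 1 / (tmax + 1)`. Hence every optimal plan
ends with backlog at most `D - 1`, and its one-step shift is a candidate plan at the next state
showing `V` drops by at least `1` per step. Since `V ≥ 0`, this is impossible.
-/

open Finset

section TravelTimes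

variable {t : N → N → ℕ}

omit [DecidableEq N] in
lemma le_tmax {i j : N} (hij : i ≠ j) : t i j ≤ tmax t := by
  unfold tmax
  exact le_sup (f := fun p : N × N => t p.1 p.2) (b := (i, j)) (by simpa using hij)

lemma le_Tmax_add_one {i j : N} (hji : j ≠ i) : t j i ≤ Tmax t i + 1 := by
  have : t j i ≤ (univ.erase i).sup (fun j => t j i) :=
    le_sup (f := fun j => t j i) (by simpa using hji)
  unfold Tmax
  omega

lemma Tmax_lt_tmax (h : 1 ≤ tmax t) (i : N) : Tmax t i < tmax t := by
  have : (univ.erase i).sup (fun j => t j i) ≤ tmax t :=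
    Finset.sup_le fun j hj => le_tmax (ne_of_mem_erase hj)
  unfold Tmax
  omega

end TravelTimes

section Feasibility

variable {t : N → N → ℕ} {x : AMoDState N V} {c : N → N → ℤ} {uc : AMoDControl N V}

section
omit [Fintype N] [DecidableEq N] [Fintype V]

lemma IsControl.v_nonneg (h : IsControl uc) (k : V) (i j : N) : 0 ≤ uc.v k i j := by
  rcases h.v_bin k i j with h' | h' <;> omega

lemma IsControl.w_nonneg (h : IsControl uc) (k : V) (i j : N) : 0 ≤ uc.w k i j := by
  rcases h.w_bin k i j with h' | h' <;> omega

end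

section
omit [Fintype V]

lemma IsState.p_nonneg (hx : IsState t x) (k : V) (i : N) (T : ℕ) : 0 ≤ x.p k i T := by
  rcases le_or_gt T (Tmax t i) with h | h
  · rcases hx.p_bin k i T h with h' | h' <;> omega
  · rw [hx.p_oob k i T h]

lemma IsState.u_nonneg (hx : IsState t x) (k : V) (i : N) : 0 ≤ x.u k i := by
  rcases hx.u_bin k i with h | h <;> omega

lemma IsState.ne_of_one_le_d (hx : IsState t x) {i j : N} (hd : 1 ≤ x.d i j) : i ≠ j := by
  rintro rfl
  linarith [hx.d_diag i]

lemma IsState.Jx_nonneg (hx : IsState t x) : 0 ≤ Jx x :=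
  sum_nonneg fun i _ => sum_nonneg fun j _ => hx.d_nonneg i j

lemma IsState.d_le_Jx (hx : IsState t x) (i j : N) : x.d i j ≤ Jx x :=
  (single_le_sum (fun j _ => hx.d_nonneg i j) (mem_univ j)).trans <|
    single_le_sum (f := fun i => ∑ j, x.d i j)
      (fun i _ => sum_nonneg fun j _ => hx.d_nonneg i j) (mem_univ i)

lemma feasState_of_nonneg (hd : ∀ i j, 0 ≤ x.d i j) (hdiag : ∀ i, x.d i i = 0)
    (hp : ∀ k i T, 0 ≤ x.p k i T) (hoob : ∀ k i T, Tmax t i < T → x.p k i T = 0)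
    (hu : ∀ k i, 0 ≤ x.u k i) (hUP : ∀ k, (∑ i, x.u k i) + pSum t x k = 1) :
    FeasState t x := by
  have hpSum : ∀ k, 0 ≤ pSum t x k := fun k =>
    sum_nonneg fun i _ => sum_nonneg fun T _ => hp k i T
  have huSum : ∀ k, 0 ≤ ∑ i, x.u k i := fun k => sum_nonneg fun i _ => hu k i
  refine ⟨⟨hd, hdiag, fun k i T hT => ?_, hoob, fun k i => ?_⟩,
    fun k => by linarith [hUP k, huSum k], hUP⟩
  · have : x.p k i T ≤ pSum t x k :=
      (single_le_sum (fun T _ => hp k i T) (mem_range.2 (Nat.lt_succ_of_le hT))).trans <|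
        single_le_sum (f := fun i => ∑ T ∈ range (Tmax t i + 1), x.p k i T)
          (fun i _ => sum_nonneg fun T _ => hp k i T) (mem_univ i)
    have := hp k i T; have := hUP k; have := huSum k
    omega
  · have : x.u k i ≤ ∑ i, x.u k i := single_le_sum (fun i _ => hu k i) (mem_univ i)
    have := hu k i; have := hUP k; have := hpSum k
    omega

end

omit [DecidableEq N] in
lemma IsControl.Ju_nonneg (h : IsControl uc) : 0 ≤ Ju t uc :=
  sum_nonneg fun k _ => sum_nonneg fun i _ => sum_nonneg fun j _ =>
    mul_nonneg (Int.natCast_nonneg _) (h.w_nonneg k i j)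

/-- Every trip into `i` lands in exactly one of the slots `0, …, Tmax t i` of `p · i ·`. -/
lemma sum_range_sum_filter_travel (ht : ∀ i j : N, i ≠ j → 1 ≤ t i j) (i : N) {f : N → ℤ}
    (hf : f i = 0) :
    ∑ T ∈ range (Tmax t i + 1), ∑ j ∈ univ.filter (fun j => t j i = T + 1), f j = ∑ j, f j := by
  simp_rw [sum_filter]
  rw [sum_comm]
  refine sum_congr rfl fun j _ => ?_
  by_cases hji : j = i
  · simp [hji, hf]
  · have h1 := ht j i hji
    have h2 := le_Tmax_add_one (t := t) hji
    rw [sum_eq_single_of_mem (t j i - 1) (mem_range.2 (by omega))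
      (fun T _ hT => if_neg (by omega)), if_pos (by omega)]

lemma pSum_succState (ht : ∀ i j : N, i ≠ j → 1 ≤ t i j) (huc : IsControl uc) (k : V) :
    pSum t (succState t x c uc) k
      = pSum t x k - ∑ i, x.p k i 0 + ∑ i, ∑ j, (uc.v k i j + uc.w k i j) := by
  have hstation : ∀ i, ∑ T ∈ range (Tmax t i + 1), (succState t x c uc).p k i T
      = ∑ T ∈ range (Tmax t i + 1), x.p k i T - x.p k i 0 + ∑ j, (uc.v k j i + uc.w k j i) := by
    intro i
    have hlt : ∀ T ∈ range (Tmax t i), (succState t x c uc).p k i T = x.p k i (T + 1) +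
        ∑ j ∈ univ.filter (fun j => t j i = T + 1), (uc.v k j i + uc.w k j i) :=
      fun T hT => if_pos (mem_range.1 hT)
    have hlast : (succState t x c uc).p k i (Tmax t i) =
        ∑ j ∈ univ.filter (fun j => t j i = Tmax t i + 1), (uc.v k j i + uc.w k j i) := by
      simp [succState]
    rw [sum_range_succ, sum_congr rfl hlt, hlast, sum_add_distrib, add_assoc,
      ← sum_range_succ (fun T => ∑ j ∈ univ.filter (fun j => t j i = T + 1),
        (uc.v k j i + uc.w k j i)),
      sum_range_sum_filter_travel ht i (by simp [huc.v_diag, huc.w_diag]),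
      sum_range_succ' (fun T => x.p k i T)]
    ring
  unfold pSum
  rw [sum_congr rfl fun i _ => hstation i, sum_add_distrib, sum_sub_distrib,
    sum_comm (f := fun i j => uc.v k j i + uc.w k j i)]

lemma FeasState.succ (ht : ∀ i j : N, i ≠ j → 1 ≤ t i j) (hc : IsArrivals c)
    (hx : FeasState t x) (huc : FeasControl t x c uc) : FeasState t (succState t x c uc) := by
  have hdep : ∀ k j i, 0 ≤ uc.v k j i + uc.w k j i := fun k j i =>
    add_nonneg (huc.isControl.v_nonneg k j i) (huc.isControl.w_nonneg k j i)
  refine feasState_of_nonneg (fun i j => ?_) (fun i => ?_) (fun k i T => ?_) (fun k i T hT => ?_)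
    (fun k i => ?_) (fun k => ?_)
  · simpa [succState] using huc.constrB i j
  · simp [succState, hx.isState.d_diag, hc.2, huc.isControl.v_diag]
  · simp only [succState]
    split_ifs
    · exact add_nonneg (hx.isState.p_nonneg k i _) (sum_nonneg fun j _ => hdep k j i)
    · exact sum_nonneg fun j _ => hdep k j i
    · exact le_rfl
  · simp only [succState]
    rw [if_neg (by omega), if_neg (by omega)]
  · simpa [succState] using huc.constrA k i
  · rw [pSum_succState ht huc.isControl, ← hx.constrUP k]
    simp only [succState, sum_sub_distrib, sum_add_distrib]
    ring

lemma Jx_succState_le (huc : IsControl uc) :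
    Jx (succState t x (fun _ _ => 0) uc) ≤ Jx x :=
  sum_le_sum fun i _ => sum_le_sum fun j _ => by
    simpa [succState] using sum_nonneg fun k (_ : k ∈ univ) => huc.v_nonneg k i j

/-- A vehicle dispatched from `j` to `i` is `t j i - 1` steps away from `i` one step later. -/
lemma IsState.le_p_succState (ht : ∀ i j : N, i ≠ j → 1 ≤ t i j) (hx : IsState t x)
    (huc : IsControl uc) (k : V) {i j : N} (hji : j ≠ i) :
    uc.v k j i + uc.w k j i ≤ (succState t x c uc).p k i (t j i - 1) := by
  have h1 := ht j i hji
  have h2 := le_Tmax_add_one (t := t) hji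
  have harr : uc.v k j i + uc.w k j i ≤
      ∑ j' ∈ univ.filter (fun j' => t j' i = t j i), (uc.v k j' i + uc.w k j' i) :=
    single_le_sum (f := fun j' => uc.v k j' i + uc.w k j' i)
      (fun j' _ => add_nonneg (huc.v_nonneg k j' i) (huc.w_nonneg k j' i)) (by simp)
  simp only [succState, Nat.sub_add_cancel h1]
  split_ifs with hlt heq
  · linarith [hx.p_nonneg k i (t j i)]
  · rwa [← heq, Nat.sub_add_cancel h1]
  · omega

end Feasibility

section Trips

variable [DecidableEq V] {t : N → N → ℕ} {x : AMoDState N V}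

def tripIndicator (k : V) (i j : N) : V → N → N → ℤ :=
  fun k' i' j' => if k' = k ∧ i' = i ∧ j' = j then 1 else 0

def serveControl (k : V) (i j : N) : AMoDControl N V := ⟨tripIndicator k i j, fun _ _ _ => 0⟩

def rebalanceControl (k : V) (i j : N) : AMoDControl N V :=
  ⟨fun _ _ _ => 0, tripIndicator k i j⟩

omit [Fintype N] [Fintype V] in
lemma tripIndicator_bin (k : V) (i j : N) (k' : V) (i' j' : N) :
    tripIndicator k i j k' i' j' = 0 ∨ tripIndicator k i j k' i' j' = 1 := by
  unfold tripIndicator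
  split_ifs <;> simp

omit [Fintype N] [Fintype V] in
lemma tripIndicator_diag {k : V} {i j : N} (hij : i ≠ j) (k' : V) (i' : N) :
    tripIndicator k i j k' i' i' = 0 :=
  if_neg fun h => hij (h.2.1.symm.trans h.2.2)

omit [Fintype V] in
lemma sum_tripIndicator_dest (k : V) (i j : N) (k' : V) (i' : N) :
    ∑ j', tripIndicator k i j k' i' j' = if k' = k ∧ i' = i then 1 else 0 := by
  by_cases hk : k' = k <;> by_cases hi : i' = i <;> simp [tripIndicator, hk, hi]

omit [Fintype N] in
lemma sum_tripIndicator_vehicle (k : V) (i j : N) (i' j' : N) :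
    ∑ k', tripIndicator k i j k' i' j' = if i' = i ∧ j' = j then 1 else 0 := by
  by_cases h : i' = i ∧ j' = j <;> simp [tripIndicator, h]

omit [Fintype V] in
lemma IsState.departures_le (hx : IsState t x) {k : V} {i : N}
    (hk : 1 ≤ x.u k i + x.p k i 0) (k' : V) (i' : N) :
    (if k' = k ∧ i' = i then (1 : ℤ) else 0) ≤ x.u k' i' + x.p k' i' 0 := by
  split_ifs with h
  · rwa [h.1, h.2]
  · exact add_nonneg (hx.u_nonneg k' i') (hx.p_nonneg k' i' 0)

lemma feasControl_serveControl (hx : IsState t x) {k : V} {i j : N}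
    (hk : 1 ≤ x.u k i + x.p k i 0) (hd : 1 ≤ x.d i j) (hij : i ≠ j) :
    FeasControl t x (fun _ _ => 0) (serveControl k i j) := by
  refine ⟨⟨tripIndicator_bin k i j, fun _ _ _ => Or.inl rfl, tripIndicator_diag hij,
    fun _ _ => rfl⟩, fun k' i' => ?_, fun i' j' => ?_⟩
  · simpa [serveControl, sum_tripIndicator_dest] using hx.departures_le hk k' i'
  · simp only [serveControl, sum_tripIndicator_vehicle, add_zero]
    split_ifs with h
    · rwa [h.1, h.2]
    · exact hx.d_nonneg i' j'

lemma feasControl_rebalanceControl (hx : IsState t x) {k : V} {i j : N}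
    (hk : 1 ≤ x.u k i + x.p k i 0) (hij : i ≠ j) :
    FeasControl t x (fun _ _ => 0) (rebalanceControl k i j) := by
  refine ⟨⟨fun _ _ _ => Or.inl rfl, tripIndicator_bin k i j, fun _ _ => rfl,
    tripIndicator_diag hij⟩, fun k' i' => ?_, fun i' j' => ?_⟩
  · simpa [rebalanceControl, sum_tripIndicator_dest] using hx.departures_le hk k' i'
  · simpa [rebalanceControl] using hx.d_nonneg i' j'

lemma Jx_succState_serveControl (k : V) (i j : N) :
    Jx (succState t x (fun _ _ => 0) (serveControl k i j)) = Jx x - 1 := by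
  simp only [Jx, succState, serveControl, sum_tripIndicator_vehicle, add_zero, sum_sub_distrib,
    ite_and]
  simp

lemma Ju_serveControl (k : V) (i j : N) : Ju t (serveControl k i j) = 0 := by
  simp [Ju, serveControl]

lemma Ju_rebalanceControl (k : V) (i j : N) : Ju t (rebalanceControl k i j) = t i j := by
  simp [Ju, rebalanceControl, tripIndicator, mul_ite, ite_and, sum_ite_eq']

end Trips

section Idle

variable {t : N → N → ℕ} {x : AMoDState N V}

def idleControl : AMoDControl N V := ⟨fun _ _ _ => 0, fun _ _ _ => 0⟩

omit [Fintype N] [DecidableEq N] [Fintype V] in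
lemma isControl_idleControl : IsControl (idleControl : AMoDControl N V) :=
  ⟨fun _ _ _ => Or.inl rfl, fun _ _ _ => Or.inl rfl, fun _ _ => rfl, fun _ _ => rfl⟩

lemma IsState.feasControl_idleControl (hx : IsState t x) :
    FeasControl t x (fun _ _ => 0) idleControl := by
  refine ⟨isControl_idleControl, fun k i => ?_, fun i j => ?_⟩
  · simpa [idleControl] using add_nonneg (hx.u_nonneg k i) (hx.p_nonneg k i 0)
  · simpa [idleControl] using hx.d_nonneg i j

omit [DecidableEq N] in
lemma Ju_idleControl : Ju t (idleControl : AMoDControl N V) = 0 := by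
  simp [Ju, idleControl]

lemma IsState.succState_idleControl_p (hx : IsState t x) (k : V) (i : N) (T : ℕ) :
    (succState t x (fun _ _ => 0) idleControl).p k i T = x.p k i (T + 1) := by
  simp only [succState, idleControl, add_zero, sum_const_zero]
  split_ifs with hlt heq
  · rfl
  · exact (hx.p_oob k i (T + 1) (by omega)).symm
  · exact (hx.p_oob k i (T + 1) (by omega)).symm

end Idle

section Plans

variable {t : N → N → ℕ} {x : AMoDState N V} {n : ℕ} {xs : ℕ → AMoDState N V}
  {cs : ℕ → AMoDControl N V} {uc : AMoDControl N V}

omit [Fintype N] [DecidableEq N] [Fintype V] in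
lemma isArrivals_zero : IsArrivals (fun _ _ : N => (0 : ℤ)) := ⟨fun _ _ => le_rfl, fun _ => rfl⟩

omit [DecidableEq N] [Fintype V] in
lemma Jx_eq_of_d_eq {y : AMoDState N V} (h : y.d = x.d) : Jx y = Jx x := by
  simp [Jx, h]

lemma succState_d_of_v_eq_zero (hv : uc.v = fun _ _ _ => 0) :
    (succState t x (fun _ _ => 0) uc).d = x.d := by
  ext i j
  simp [succState, hv]

def seqCons {α : Type} (a : α) (f : ℕ → α) : ℕ → α
  | 0 => a
  | m + 1 => f m

lemma FeasTraj.Jx_le (h : FeasTraj t x n xs cs) {a b : ℕ} (hab : a ≤ b) (hbn : b ≤ n) :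
    Jx (xs b) ≤ Jx (xs a) := by
  induction b, hab using Nat.le_induction with
  | base => exact le_rfl
  | succ b hab ih =>
    have hstep := h.2 b (by omega)
    rw [hstep.2]
    exact (Jx_succState_le hstep.1.isControl).trans (ih (by omega))

lemma FeasTraj.feasState (ht : ∀ i j : N, i ≠ j → 1 ≤ t i j) (hx : FeasState t x)
    (h : FeasTraj t x n xs cs) {m : ℕ} (hm : m ≤ n) : FeasState t (xs m) := by
  induction m with
  | zero => exact h.1 ▸ hx
  | succ m ih =>
    have hstep := h.2 m (by omega)
    rw [hstep.2]
    exact (ih (by omega)).succ ht isArrivals_zero hstep.1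

def CanReduceBacklog (t : N → N → ℕ) (x : AMoDState N V) (s : ℕ) (J B : ℤ) : Prop :=
  ∃ xs cs, (∀ n, FeasTraj t x n xs cs) ∧ Jx (xs s) ≤ J ∧ ∀ n, ∑ m ∈ range n, Ju t (cs m) ≤ B

lemma CanReduceBacklog.mono {s s' : ℕ} {J J' B B' : ℤ} (h : CanReduceBacklog t x s J B)
    (hs : s ≤ s') (hJ : J ≤ J') (hB : B ≤ B') : CanReduceBacklog t x s' J' B' := by
  obtain ⟨xs, cs, hfeas, hJs, hcost⟩ := h
  exact ⟨xs, cs, hfeas, ((hfeas s').Jx_le hs le_rfl).trans (hJs.trans hJ),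
    fun n => (hcost n).trans hB⟩

lemma CanReduceBacklog.cons {s : ℕ} {J B : ℤ} (huc : FeasControl t x (fun _ _ => 0) uc)
    (h : CanReduceBacklog t (succState t x (fun _ _ => 0) uc) s J B) :
    CanReduceBacklog t x (s + 1) J (Ju t uc + B) := by
  obtain ⟨xs, cs, hfeas, hJ, hcost⟩ := h
  refine ⟨seqCons x xs, seqCons uc cs, fun n => ⟨rfl, fun τ hτ => ?_⟩, hJ,
    fun n => ?_⟩
  · cases τ with
    | zero => exact ⟨huc, (hfeas 0).1⟩
    | succ τ => exact (hfeas n).2 τ (by omega)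
  · cases n with
    | zero => simpa using add_nonneg huc.isControl.Ju_nonneg (by simpa using hcost 0)
    | succ n =>
      rw [sum_range_succ']
      simp only [seqCons]
      linarith [hcost n]

lemma FeasState.canReduceBacklog_idle (ht : ∀ i j : N, i ≠ j → 1 ≤ t i j) (hx : FeasState t x) :
    CanReduceBacklog t x 0 (Jx x) 0 := by
  set step := fun y : AMoDState N V => succState t y (fun _ _ => 0) idleControl
  have hfeas : ∀ n, FeasState t (step^[n] x) := by
    intro n
    induction n with
    | zero => exact hx
    | succ n ih =>
      rw [Function.iterate_succ_apply']
      exact ih.succ ht isArrivals_zero ih.isState.feasControl_idleControl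
  refine ⟨fun n => step^[n] x, fun _ => idleControl, fun n => ⟨rfl, fun τ _ =>
    ⟨(hfeas τ).isState.feasControl_idleControl, Function.iterate_succ_apply' step τ x⟩⟩,
    le_rfl, fun n => by simp [Ju_idleControl]⟩

lemma FeasState.canReduceBacklog_serve [DecidableEq V] (ht : ∀ i j : N, i ≠ j → 1 ≤ t i j)
    (hx : FeasState t x) {k : V} {i j : N} (hk : 1 ≤ x.u k i + x.p k i 0) (hd : 1 ≤ x.d i j) :
    CanReduceBacklog t x 1 (Jx x - 1) 0 := by
  have huc := feasControl_serveControl hx.isState hk hd (hx.isState.ne_of_one_le_d hd)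
  simpa [Jx_succState_serveControl, Ju_serveControl] using
    ((hx.succ ht isArrivals_zero huc).canReduceBacklog_idle ht).cons huc

lemma canReduceBacklog_of_en_route (ht : ∀ i j : N, i ≠ j → 1 ≤ t i j) {k : V} {b : N} {s : ℕ}
    {J B : ℤ} {d₀ : N → N → ℤ} (hat : ∀ y : AMoDState N V, FeasState t y → y.d = d₀ →
      1 ≤ y.u k b + y.p k b 0 → CanReduceBacklog t y s J B) :
    ∀ (T : ℕ) (x : AMoDState N V), FeasState t x → x.d = d₀ → 1 ≤ x.p k b T →
      CanReduceBacklog t x (T + s) J B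
  | 0, x, hx, hd, hp => by simpa using hat x hx hd (by linarith [hx.isState.u_nonneg k b])
  | T + 1, x, hx, hd, hp => by
    have hidle := hx.isState.feasControl_idleControl
    have := (canReduceBacklog_of_en_route ht hat T _ (hx.succ ht isArrivals_zero hidle)
      (by rw [succState_d_of_v_eq_zero rfl, hd])
      (by rwa [hx.isState.succState_idleControl_p])).cons hidle
    exact this.mono (by omega) le_rfl (by simp [Ju_idleControl])

end Plans

section Serving

variable {t : N → N → ℕ} {x : AMoDState N V}

omit [DecidableEq N] [Fintype V] in
lemma exists_one_le_d_of_Jx_pos (hJ : 0 < Jx x) : ∃ i j, 1 ≤ x.d i j := by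
  obtain ⟨i, -, hi⟩ := exists_lt_of_sum_lt (s := univ) (f := fun _ => (0 : ℤ))
    (by simpa [Jx] using hJ)
  obtain ⟨j, -, hj⟩ := exists_lt_of_sum_lt (s := univ) (f := fun _ => (0 : ℤ))
    (by simpa using hi)
  exact ⟨i, j, hj⟩

omit [Fintype V] in
lemma IsState.one_le_tmax (ht : ∀ i j : N, i ≠ j → 1 ≤ t i j) (hx : IsState t x)
    (hJ : 0 < Jx x) : 1 ≤ tmax t := by
  obtain ⟨i, j, hd⟩ := exists_one_le_d_of_Jx_pos hJ
  have hij := hx.ne_of_one_le_d hd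
  exact (ht i j hij).trans (le_tmax hij)

omit [Fintype V] in
lemma FeasState.exists_vehicle_location (hx : FeasState t x) (k : V) :
    (∃ a, 1 ≤ x.u k a) ∨ ∃ b T, 1 ≤ x.p k b T := by
  by_contra! h
  have hu : ∑ a, x.u k a ≤ 0 := sum_nonpos fun a _ => by linarith [h.1 a]
  have hp : pSum t x k ≤ 0 := sum_nonpos fun b _ => sum_nonpos fun T _ => by linarith [h.2 b T]
  linarith [hx.constrUP k]

lemma FeasState.canReduceBacklog_of_available [DecidableEq V] (ht : ∀ i j : N, i ≠ j → 1 ≤ t i j)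
    (hx : FeasState t x) {k : V} {a i j : N} (hk : 1 ≤ x.u k a + x.p k a 0)
    (hd : 1 ≤ x.d i j) : CanReduceBacklog t x (tmax t + 1) (Jx x - 1) (tmax t) := by
  by_cases hai : a = i
  · subst hai
    exact (hx.canReduceBacklog_serve ht hk hd).mono (by omega) le_rfl (by positivity)
  · have huc := feasControl_rebalanceControl hx.isState hk hai
    have harr : 1 ≤ (succState t x (fun _ _ => 0) (rebalanceControl k a i)).p k i (t a i - 1) := by
      simpa [rebalanceControl, tripIndicator] using
        hx.isState.le_p_succState ht huc.isControl k hai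
    have hplan := (canReduceBacklog_of_en_route ht (d₀ := x.d) (fun y hy hyd hyk => by
        simpa [Jx_eq_of_d_eq hyd] using hy.canReduceBacklog_serve ht hyk (hyd ▸ hd))
      (t a i - 1) _ (hx.succ ht isArrivals_zero huc) (succState_d_of_v_eq_zero rfl) harr).cons huc
    rw [Ju_rebalanceControl] at hplan
    have hta := le_tmax (t := t) hai
    have := ht a i hai
    exact hplan.mono (by omega) le_rfl (by simpa using hta)

/-- Any vehicle can pick up a waiting customer within `2 tmax` steps: at most `tmax - 1` to
finish its current trip, at most `tmax` to rebalance to the customer, one to pick them up. -/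
lemma FeasState.canReduceBacklog_of_Jx_pos [Nonempty V] (ht : ∀ i j : N, i ≠ j → 1 ≤ t i j)
    (hx : FeasState t x) (hJ : 0 < Jx x) :
    CanReduceBacklog t x (2 * tmax t) (Jx x - 1) (tmax t) := by
  classical
  obtain ⟨i, j, hd⟩ := exists_one_le_d_of_Jx_pos hJ
  have htmax := hx.isState.one_le_tmax ht hJ
  obtain ⟨k⟩ := ‹Nonempty V›
  rcases hx.exists_vehicle_location k with ⟨a, ha⟩ | ⟨b, T, hp⟩
  · exact (hx.canReduceBacklog_of_available ht (by linarith [hx.isState.p_nonneg k a 0]) hd).mono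
      (by omega) le_rfl le_rfl
  · have hT : T ≤ Tmax t b := by
      by_contra! hT
      rw [hx.isState.p_oob k b T hT] at hp
      omega
    have := Tmax_lt_tmax htmax b
    exact (canReduceBacklog_of_en_route ht (d₀ := x.d) (fun y hy hyd hyk => by
        simpa [Jx_eq_of_d_eq hyd] using hy.canReduceBacklog_of_available ht hyk (hyd ▸ hd))
      T x hx rfl hp).mono (by omega) le_rfl le_rfl

end Serving

section Costs

variable {t : N → N → ℕ} {ρ1 : ℝ} {x : AMoDState N V} {n : ℕ} {xs : ℕ → AMoDState N V}
  {cs : ℕ → AMoDControl N V}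

lemma FeasTraj.mul_Jx_le_planCost (hρ : 0 ≤ ρ1) (h : FeasTraj t x n xs cs) :
    n * (Jx (xs n) : ℝ) ≤ planCost t ρ1 n xs cs := by
  calc n * (Jx (xs n) : ℝ) = ∑ _τ ∈ range n, (Jx (xs n) : ℝ) := by simp
    _ ≤ planCost t ρ1 n xs cs := sum_le_sum fun τ hτ => by
      have hτn := mem_range.1 hτ
      have hJ : (Jx (xs n) : ℝ) ≤ Jx (xs (τ + 1)) := by exact_mod_cast h.Jx_le hτn le_rfl
      have hJu : (0 : ℝ) ≤ Ju t (cs τ) := by exact_mod_cast (h.2 τ hτn).1.isControl.Ju_nonneg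
      nlinarith

lemma CanReduceBacklog.exists_planCost_le (hρ : 0 ≤ ρ1) {s m : ℕ} {J B : ℤ}
    (h : CanReduceBacklog t x s J B) (hs : s ≤ m + 1) :
    ∃ xs cs, FeasTraj t x (m + 1) xs cs ∧
      planCost t ρ1 (m + 1) xs cs ≤ m * Jx x + J + ρ1 * B := by
  obtain ⟨xs, cs, hfeas, hJ, hB⟩ := h
  have htraj := hfeas (m + 1)
  refine ⟨xs, cs, htraj, ?_⟩
  have hfirst : ∑ τ ∈ range m, (Jx (xs (τ + 1)) : ℝ) ≤ m * Jx x := by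
    have hle : ∀ τ ∈ range m, (Jx (xs (τ + 1)) : ℝ) ≤ Jx x := fun τ hτ => by
      rw [← htraj.1]
      exact_mod_cast htraj.Jx_le (Nat.zero_le _) (by simp at hτ; omega)
    simpa using sum_le_sum hle
  have hlast : (Jx (xs (m + 1)) : ℝ) ≤ J := by exact_mod_cast (htraj.Jx_le hs le_rfl).trans hJ
  have hbudget : ∑ τ ∈ range (m + 1), (Ju t (cs τ) : ℝ) ≤ B := by exact_mod_cast hB (m + 1)
  unfold planCost
  rw [sum_add_distrib, ← mul_sum, sum_range_succ]
  nlinarith [mul_le_mul_of_nonneg_left hbudget hρ]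

/-- The witness drops the first step of the plan and idles at its end. -/
lemma FeasTraj.exists_shift (ht : ∀ i j : N, i ≠ j → 1 ≤ t i j) (hρ : 0 ≤ ρ1)
    (hx : FeasState t x) (h : FeasTraj t x (n + 1) xs cs) :
    ∃ ys ds, FeasTraj t (xs 1) (n + 1) ys ds ∧
      planCost t ρ1 (n + 1) ys ds ≤ planCost t ρ1 (n + 1) xs cs - Jx (xs 1) + Jx (xs (n + 1)) := by
  set ys := Function.update (fun m => xs (m + 1)) (n + 1)
    (succState t (xs (n + 1)) (fun _ _ => 0) idleControl)
  set ds := Function.update (fun m => cs (m + 1)) n idleControl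
  have hys : ∀ m ≤ n, ys m = xs (m + 1) := fun m hm => Function.update_of_ne (by omega) _ _
  have hds : ∀ m < n, ds m = cs (m + 1) := fun m hm => Function.update_of_ne (by omega) _ _
  have hlast := (h.feasState ht hx le_rfl).isState.feasControl_idleControl
  refine ⟨ys, ds, ⟨hys 0 (Nat.zero_le _), fun τ hτ => ?_⟩, ?_⟩
  · rcases Nat.lt_or_ge τ n with hτn | hτn
    · rw [hys τ hτn.le, hds τ hτn, hys (τ + 1) hτn]
      exact h.2 (τ + 1) (by omega)
    · obtain rfl : τ = n := by omega
      rw [hys τ le_rfl, show ds τ = idleControl from Function.update_self _ _ _,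
        show ys (τ + 1) = _ from Function.update_self _ _ _]
      exact ⟨hlast, rfl⟩
  · have hJu : (0 : ℝ) ≤ Ju t (cs 0) := by exact_mod_cast (h.2 0 (by omega)).1.isControl.Ju_nonneg
    have hsame : ∀ τ ∈ range n, (Jx (ys (τ + 1)) : ℝ) + ρ1 * Ju t (ds τ) =
        Jx (xs (τ + 1 + 1)) + ρ1 * Ju t (cs (τ + 1)) := fun τ hτ => by
      rw [hys (τ + 1) (by simp at hτ; omega), hds τ (by simpa using hτ)]
    unfold planCost
    rw [sum_range_succ, sum_congr rfl hsame, sum_range_succ' _ n,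
      show ds n = idleControl from Function.update_self _ _ _,
      show ys (n + 1) = _ from Function.update_self _ _ _,
      Jx_eq_of_d_eq (succState_d_of_v_eq_zero rfl), Ju_idleControl]
    push_cast
    nlinarith

end Costs

section MPC

variable {t : N → N → ℕ} {ρ1 : ℝ} {thor : ℕ} {x : AMoDState N V} {xs ys ys' : ℕ → AMoDState N V}
  {cs ds ds' : ℕ → AMoDControl N V}

lemma MPCOptimal.planCost_nonneg (ht : ∀ i j : N, i ≠ j → 1 ≤ t i j) (hρ : 0 ≤ ρ1)
    (hx : FeasState t x) (h : MPCOptimal t ρ1 thor x ys ds) : 0 ≤ planCost t ρ1 thor ys ds := by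
  have hJ : (0 : ℝ) ≤ Jx (ys thor) := by
    exact_mod_cast (h.1.feasState ht hx le_rfl).isState.Jx_nonneg
  exact (mul_nonneg (Nat.cast_nonneg thor) hJ).trans (h.1.mul_Jx_le_planCost hρ)

lemma MPCOptimal.planCost_le [Nonempty V] (ht : ∀ i j : N, i ≠ j → 1 ≤ t i j) (hρ : 0 ≤ ρ1)
    (hthor : 2 * tmax t ≤ thor) (hx : FeasState t x) (hJ : 0 < Jx x)
    (h : MPCOptimal t ρ1 thor x ys ds) :
    planCost t ρ1 thor ys ds ≤ thor * Jx x - 1 + ρ1 * tmax t := by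
  have htmax := hx.isState.one_le_tmax ht hJ
  obtain ⟨m, rfl⟩ : ∃ m, thor = m + 1 := ⟨thor - 1, by omega⟩
  obtain ⟨zs, es, hfeas, hcost⟩ :=
    (hx.canReduceBacklog_of_Jx_pos ht hJ).exists_planCost_le hρ hthor
  have := h.2 zs es hfeas
  push_cast at hcost ⊢
  linarith

/-- Otherwise the optimal plan would cost at least `thor * Jx x`, more than the plan of
`FeasState.canReduceBacklog_of_Jx_pos`. -/
lemma MPCOptimal.Jx_lt [Nonempty V] (ht : ∀ i j : N, i ≠ j → 1 ≤ t i j) (hρ : 0 ≤ ρ1)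
    (hρtmax : ρ1 * tmax t < 1) (hthor : 2 * tmax t ≤ thor) (hx : FeasState t x) (hJ : 0 < Jx x)
    (h : MPCOptimal t ρ1 thor x ys ds) : Jx (ys thor) < Jx x := by
  have hle := h.planCost_le ht hρ hthor hx hJ
  have hge := h.1.mul_Jx_le_planCost hρ
  have : (thor : ℝ) * Jx (ys thor) < thor * Jx x := by linarith
  exact_mod_cast lt_of_mul_lt_mul_left this (Nat.cast_nonneg thor)

/-- Shifting the optimal plan by one step saves its first stage cost `Jx x' = Jx x` and adds at
most `Jx (ys thor) ≤ Jx x - 1`. -/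
lemma MPCOptimal.planCost_le_sub_one [Nonempty V] (ht : ∀ i j : N, i ≠ j → 1 ≤ t i j)
    (hρ : 0 ≤ ρ1) (hρtmax : ρ1 * tmax t < 1) (hthor : 2 * tmax t ≤ thor) (hx : FeasState t x)
    (hJ : 0 < Jx x) (h : MPCOptimal t ρ1 thor x ys ds) {x' : AMoDState N V}
    (hx' : x' = succState t x (fun _ _ => 0) (ds 0)) (hJx' : Jx x' = Jx x)
    (h' : MPCOptimal t ρ1 thor x' ys' ds') :
    planCost t ρ1 thor ys' ds' ≤ planCost t ρ1 thor ys ds - 1 := by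
  have hlt := h.Jx_lt ht hρ hρtmax hthor hx hJ
  have htmax := hx.isState.one_le_tmax ht hJ
  obtain ⟨m, rfl⟩ : ∃ m, thor = m + 1 := ⟨thor - 1, by omega⟩
  have hys1 : ys 1 = x' := by rw [hx', ← h.1.1]; exact (h.1.2 0 (by omega)).2
  obtain ⟨zs, es, hfeas, hcost⟩ := h.1.exists_shift ht hρ hx
  rw [hys1] at hfeas hcost
  have hopt := h'.2 zs es hfeas
  have : (Jx (ys (m + 1)) : ℝ) ≤ Jx x - 1 := by exact_mod_cast Int.le_sub_one_of_lt hlt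
  rw [hJx'] at hcost
  linarith

lemma MPCTraj.feasState (ht : ∀ i j : N, i ≠ j → 1 ≤ t i j) (h : MPCTraj t ρ1 thor xs cs)
    (hx0 : FeasState t (xs 0)) (τ : ℕ) : FeasState t (xs τ) := by
  induction τ with
  | zero => exact hx0
  | succ τ ih =>
    rw [(h.1 τ).2]
    exact ih.succ ht isArrivals_zero (h.1 τ).1

lemma MPCTraj.exists_Jx_eq (ht : ∀ i j : N, i ≠ j → 1 ≤ t i j) (h : MPCTraj t ρ1 thor xs cs)
    (hx0 : FeasState t (xs 0)) : ∃ T0, ∀ τ ≥ T0, Jx (xs τ) = Jx (xs T0) := by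
  have hanti : Antitone fun τ => (Jx (xs τ)).toNat := antitone_nat_of_succ_le fun τ => by
    rw [(h.1 τ).2]
    exact Int.toNat_le_toNat (Jx_succState_le (h.1 τ).1.isControl)
  obtain ⟨T0, hT0⟩ := WellFoundedLT.antitone_chain_condition hanti
  refine ⟨T0, fun τ hτ => ?_⟩
  have := hT0 τ hτ
  have := (h.feasState ht hx0 τ).isState.Jx_nonneg
  have := (h.feasState ht hx0 T0).isState.Jx_nonneg
  omega

end MPC

omit [Fintype N] [DecidableEq N] [Fintype V] in
lemma false_of_nonneg_of_le_sub_one {f : ℕ → ℝ} (h0 : ∀ n, 0 ≤ f n)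
    (h : ∀ n, f (n + 1) ≤ f n - 1) : False := by
  have hdesc : ∀ n : ℕ, f n ≤ f 0 - n := fun n => by
    induction n with
    | zero => simp
    | succ n ih => push_cast; linarith [h n]
  obtain ⟨n, hn⟩ := exists_nat_gt (f 0)
  linarith [hdesc n, h0 n]

theorem mpc_solves_ARP_general {N V : Type} [Fintype N] [DecidableEq N] [Fintype V]
    [Nonempty V] (t : N → N → ℕ)
    (ht : ∀ i j : N, i ≠ j → 1 ≤ t i j)
    (thor : ℕ) (hthor : 2 * tmax t ≤ thor) :
    ∃ ρbar : ℝ, 0 < ρbar ∧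
      ∀ ρ1 : ℝ, 0 ≤ ρ1 → ρ1 < ρbar →
        ∀ (xs : ℕ → AMoDState N V) (cs : ℕ → AMoDControl N V),
          FeasState t (xs 0) → MPCTraj t ρ1 thor xs cs →
            ∃ T : ℕ, ∀ τ ≥ T, ∀ i j : N, (xs τ).d i j = 0 := by
  refine ⟨1 / (tmax t + 1), by positivity, fun ρ1 hρ hρbar xs cs hx0 hmpc => ?_⟩
  have hρtmax : ρ1 * tmax t < 1 := by
    rw [lt_div_iff₀ (by positivity)] at hρbar
    nlinarith
  have hfeas := hmpc.feasState ht hx0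
  obtain ⟨T0, hT0⟩ := hmpc.exists_Jx_eq ht hx0
  rcases (hfeas T0).isState.Jx_nonneg.eq_or_lt with hJ | hJ
  · refine ⟨T0, fun τ hτ i j => le_antisymm ?_ ((hfeas τ).isState.d_nonneg i j)⟩
    exact ((hfeas τ).isState.d_le_Jx i j).trans (hT0 τ hτ ▸ hJ.ge)
  · choose ys ds hopt hds using hmpc.2
    refine (false_of_nonneg_of_le_sub_one
      (f := fun n => planCost t ρ1 thor (ys (T0 + n)) (ds (T0 + n)))
      (fun n => (hopt _).planCost_nonneg ht hρ (hfeas _)) fun n => ?_).elim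
    have hJn := hT0 (T0 + n) (by omega)
    exact (hopt _).planCost_le_sub_one ht hρ hρtmax hthor (hfeas _) (hJn ▸ hJ)
      (hds _ ▸ (hmpc.1 _).2) (by rw [hT0 _ (by omega), hJn]) (hopt _)

/-- **Theorem 1 (asymptotic stability of MPC without charging constraints):** if
`t_hor ≥ 2·tmax`, there is a `ρ̄ > 0` such that for every weight `0 ≤ ρ₁ < ρ̄`, every
MPC trajectory of the undisturbed system from a feasible state eventually has all
waiting-customer counts equal to zero. -/
theorem mpc_solves_ARP {N V : Type} [Fintype N] [DecidableEq N] [Fintype V]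
    [Nonempty V] (t : N → N → ℕ) (hcard : 2 ≤ Fintype.card N)
    (ht : ∀ i j : N, i ≠ j → 1 ≤ t i j)
    (thor : ℕ) (hthor : 2 * tmax t ≤ thor) :
    ∃ ρbar : ℝ, 0 < ρbar ∧
      ∀ ρ1 : ℝ, 0 ≤ ρ1 → ρ1 < ρbar →
        ∀ (xs : ℕ → AMoDState N V) (cs : ℕ → AMoDControl N V),
          FeasState t (xs 0) → MPCTraj t ρ1 thor xs cs →
            ∃ T : ℕ, ∀ τ ≥ T, ∀ i j : N, (xs τ).d i j = 0 :=
  mpc_solves_ARP_general t ht thor hthor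
end
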